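/- arXiv:1803.09412 — 4 statements merged into one kernel-verified Lean document; each statement's English description precedes it below -/
import Mathlib

section
/- Let L be a real p×q matrix, M a real r×s matrix, and N a real p×s matrix, and let L⁺ and M⁺ be Moore–Penrose inverses of L and M respectively. Then the matrix equation L X M = N has a solution X (a q×r real matrix) if and only if L L⁺ N M⁺ M = N. Moreover, in that case every matrix of the form X = L⁺ N M⁺ + Y − L⁺ L Y M M⁺, where Y is an arbitrary real q×r matrix, is a solution of L X M = N. -/
open Matrix

/-!
Since `L L⁺ L = L` and `M M⁺ M = M`, the map `N ↦ L L⁺ N M⁺ M` fixes every product `L X M`,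
which gives necessity; conversely, if `N` is fixed then `L X M = N` for each
`X = L⁺ N M⁺ + Y - L⁺ L Y M M⁺`, because the `Y`-terms cancel once sandwiched between `L` and `M`.
-/

namespace Matrix

variable {R : Type*} [Ring R] {l m n o : Type*} [Fintype l] [Fintype m] [Fintype n] [Fintype o]
  {L : Matrix l m R} {G : Matrix m l R} {M : Matrix n o R} {H : Matrix o n R}

theorem mul_mul_mul_mul_eq_of_mul_mul_eq (hL : L * G * L = L) (hM : M * H * M = M)
    (X : Matrix m n R) : L * G * (L * X * M) * (H * M) = L * X * M := by
  calc L * G * (L * X * M) * (H * M) = (L * G * L) * X * (M * H * M) := by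
        simp only [Matrix.mul_assoc]
    _ = L * X * M := by rw [hL, hM]

theorem mul_add_sub_mul_eq_of_mul_mul_eq (hL : L * G * L = L) (hM : M * H * M = M)
    {N : Matrix l o R} (hN : L * G * N * (H * M) = N) (Y : Matrix m n R) :
    L * (G * N * H + Y - G * L * Y * (M * H)) * M = N := by
  have hY : L * (G * L * Y * (M * H)) * M = L * Y * M := by
    simpa only [Matrix.mul_assoc] using mul_mul_mul_mul_eq_of_mul_mul_eq hL hM Y
  calc L * (G * N * H + Y - G * L * Y * (M * H)) * M
      = L * G * N * (H * M) + L * Y * M - L * (G * L * Y * (M * H)) * M := by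
        simp only [Matrix.mul_add, Matrix.mul_sub, Matrix.add_mul, Matrix.sub_mul,
          Matrix.mul_assoc]
    _ = N := by rw [hN, hY, add_sub_cancel_right]

end Matrix

theorem stmt_0_general {p q r s : ℕ}
    (L : Matrix (Fin p) (Fin q) ℝ) (M : Matrix (Fin r) (Fin s) ℝ)
    (N : Matrix (Fin p) (Fin s) ℝ)
    (Ld : Matrix (Fin q) (Fin p) ℝ) (Md : Matrix (Fin s) (Fin r) ℝ)
    (hL1 : L * Ld * L = L)
    (hM1 : M * Md * M = M) :
    ((∃ X : Matrix (Fin q) (Fin r) ℝ, L * X * M = N) ↔ L * Ld * N * (Md * M) = N) ∧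
    (L * Ld * N * (Md * M) = N →
      ∀ Y : Matrix (Fin q) (Fin r) ℝ,
        L * (Ld * N * Md + Y - Ld * L * Y * (M * Md)) * M = N) := by
  have solution := fun hN => mul_add_sub_mul_eq_of_mul_mul_eq hL1 hM1 (N := N) hN
  refine ⟨⟨?_, fun hN => ⟨Ld * N * Md, ?_⟩⟩, solution⟩
  · rintro ⟨X, rfl⟩
    exact mul_mul_mul_mul_eq_of_mul_mul_eq hL1 hM1 X
  · simpa using solution hN 0

/-- Solvability of the matrix equation `L X M = N` via Moore–Penrose
inverses, and the parametrization of solutions. -/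
theorem stmt_0 {p q r s : ℕ}
    (L : Matrix (Fin p) (Fin q) ℝ) (M : Matrix (Fin r) (Fin s) ℝ)
    (N : Matrix (Fin p) (Fin s) ℝ)
    (Ld : Matrix (Fin q) (Fin p) ℝ) (Md : Matrix (Fin s) (Fin r) ℝ)
    (hL1 : L * Ld * L = L) (hL2 : Ld * L * Ld = Ld)
    (hL3 : (L * Ld)ᵀ = L * Ld) (hL4 : (Ld * L)ᵀ = Ld * L)
    (hM1 : M * Md * M = M) (hM2 : Md * M * Md = Md)
    (hM3 : (M * Md)ᵀ = M * Md) (hM4 : (Md * M)ᵀ = Md * M) :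
    ((∃ X : Matrix (Fin q) (Fin r) ℝ, L * X * M = N) ↔ L * Ld * N * (Md * M) = N) ∧
    (L * Ld * N * (Md * M) = N →
      ∀ Y : Matrix (Fin q) (Fin r) ℝ,
        L * (Ld * N * Md + Y - Ld * L * Y * (M * Md)) * M = N) :=
  stmt_0_general L M N Ld Md hL1 hM1
end

section
/- Let A, Q be real n×n matrices, B a real n×m matrix, R a symmetric real m×m matrix with Moore–Penrose inverse R⁺, and let P be a symmetric real n×n matrix satisfying the regular algebraic Riccati equation AᵀP + PA + Q − P B R⁺ Bᵀ P = 0 together with the regularity condition Bᵀ P = R R⁺ Bᵀ P. Let x : ℝ → ℝⁿ be differentiable and u : ℝ → ℝᵐ be such that x′(t) = A x(t) + B u(t) for all t. Then for all t, the derivative of t ↦ x(t)ᵀ P x(t) equals −x(t)ᵀ Q x(t) − u(t)ᵀ R u(t) + (u(t) + R⁺ Bᵀ P x(t))ᵀ R (u(t) + R⁺ Bᵀ P x(t)). -/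
/-!
Along a trajectory, the derivative of `xᵀ P x` is `xᵀ (AᵀP + PA) x + 2 uᵀ w` with `w = Bᵀ P x`.
The Riccati equation replaces `AᵀP + PA` by `P B R⁺ Bᵀ P - Q`, which contributes `wᵀ R⁺ w`,
and the regularity condition `R R⁺ w = w` is exactly what makes
`(u + R⁺ w)ᵀ R (u + R⁺ w) = uᵀ R u + 2 uᵀ w + wᵀ R⁺ w`, completing the square.
-/

open Matrix

section Derivatives

variable {𝕜 ι κ : Type*} [NontriviallyNormedField 𝕜] [Fintype ι] {t : 𝕜}

theorem HasDerivAt.dotProduct {x y : 𝕜 → ι → 𝕜} {x' y' : ι → 𝕜}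
    (hx : HasDerivAt x x' t) (hy : HasDerivAt y y' t) :
    HasDerivAt (fun s => x s ⬝ᵥ y s) (x' ⬝ᵥ y t + x t ⬝ᵥ y') t := by
  simp only [_root_.dotProduct, ← Finset.sum_add_distrib]
  exact .fun_sum fun i _ => (hasDerivAt_pi.1 hx i).mul (hasDerivAt_pi.1 hy i)

theorem HasDerivAt.const_mulVec (M : Matrix κ ι 𝕜) {y : 𝕜 → ι → 𝕜} {y' : ι → 𝕜}
    (hy : HasDerivAt y y' t) : HasDerivAt (fun s => M *ᵥ y s) (M *ᵥ y') t :=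
  hasDerivAt_pi.2 fun i => by
    simpa only [zero_dotProduct, zero_add, mulVec] using (hasDerivAt_const t (M i)).dotProduct hy

end Derivatives

namespace Matrix

variable {α ι κ : Type*} [CommRing α] [Fintype ι] [Fintype κ]

theorem mulVec_dotProduct (M : Matrix ι κ α) (v : κ → α) (w : ι → α) :
    M *ᵥ v ⬝ᵥ w = v ⬝ᵥ Mᵀ *ᵥ w := by
  rw [dotProduct_transpose_mulVec, dotProduct_comm]

theorem dotProduct_mulVec_comm_of_transpose_eq {P : Matrix ι ι α} (hP : Pᵀ = P) (a b : ι → α) :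
    a ⬝ᵥ P *ᵥ b = b ⬝ᵥ P *ᵥ a := by
  simpa only [hP] using dotProduct_transpose_mulVec P a b

theorem mulVec_dotProduct_mulVec_add_dotProduct_mulVec_mulVec (M P : Matrix ι ι α)
    (a : ι → α) : M *ᵥ a ⬝ᵥ P *ᵥ a + a ⬝ᵥ P *ᵥ (M *ᵥ a) = a ⬝ᵥ (Mᵀ * P + P * M) *ᵥ a := by
  rw [add_mulVec, dotProduct_add, ← mulVec_mulVec, ← mulVec_mulVec, mulVec_dotProduct]

theorem add_dotProduct_mulVec_add_of_mulVec_mulVec_eq {R Rd : Matrix κ κ α} (hR : Rᵀ = R)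
    {w : κ → α} (hw : R *ᵥ Rd *ᵥ w = w) (v : κ → α) :
    (v + Rd *ᵥ w) ⬝ᵥ R *ᵥ (v + Rd *ᵥ w) = v ⬝ᵥ R *ᵥ v + 2 * (v ⬝ᵥ w) + w ⬝ᵥ Rd *ᵥ w := by
  have hcross : Rd *ᵥ w ⬝ᵥ R *ᵥ v = v ⬝ᵥ w := by
    rw [dotProduct_mulVec_comm_of_transpose_eq hR, hw]
  simp only [mulVec_add, dotProduct_add, add_dotProduct, hw, hcross, dotProduct_comm (Rd *ᵥ w) w]
  ring

theorem mulVec_add_dotProduct_mulVec_add_eq_of_riccati {A Q P : Matrix ι ι α}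
    {B : Matrix ι κ α} {R Rd : Matrix κ κ α} (hR : Rᵀ = R) (hP : Pᵀ = P)
    (hRic : Aᵀ * P + P * A + Q - P * B * Rd * Bᵀ * P = 0) (hReg : Bᵀ * P = R * Rd * Bᵀ * P)
    (a : ι → α) (v : κ → α) :
    (A *ᵥ a + B *ᵥ v) ⬝ᵥ P *ᵥ a + a ⬝ᵥ P *ᵥ (A *ᵥ a + B *ᵥ v)
      = -(a ⬝ᵥ Q *ᵥ a) - v ⬝ᵥ R *ᵥ v
        + (v + Rd *ᵥ Bᵀ *ᵥ P *ᵥ a) ⬝ᵥ R *ᵥ (v + Rd *ᵥ Bᵀ *ᵥ P *ᵥ a) := by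
  set w := Bᵀ *ᵥ P *ᵥ a
  have hw : R *ᵥ Rd *ᵥ w = w := by
    simp only [w, mulVec_mulVec, ← Matrix.mul_assoc, ← hReg]
  have hcontrol : B *ᵥ v ⬝ᵥ P *ᵥ a + a ⬝ᵥ P *ᵥ (B *ᵥ v) = 2 * (v ⬝ᵥ w) := by
    rw [dotProduct_mulVec_comm_of_transpose_eq hP a, mulVec_dotProduct]
    ring
  have hARE : Aᵀ * P + P * A = P * B * Rd * Bᵀ * P - Q :=
    eq_sub_of_add_eq (sub_eq_zero.mp hRic)
  have hgain : a ⬝ᵥ (P * B * Rd * Bᵀ * P) *ᵥ a = w ⬝ᵥ Rd *ᵥ w := by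
    rw [← mulVec_mulVec, ← mulVec_mulVec, ← mulVec_mulVec, ← mulVec_mulVec,
      dotProduct_mulVec_comm_of_transpose_eq hP, mulVec_dotProduct, dotProduct_comm]
  rw [add_dotProduct_mulVec_add_of_mulVec_mulVec_eq hR hw, add_dotProduct, mulVec_add,
    dotProduct_add]
  have hdrift := mulVec_dotProduct_mulVec_add_dotProduct_mulVec_mulVec A P a
  rw [hARE, sub_mulVec, dotProduct_sub, hgain] at hdrift
  linear_combination hdrift + hcontrol

end Matrix

theorem stmt_2_general {n m : ℕ}
    (A Q : Matrix (Fin n) (Fin n) ℝ) (B : Matrix (Fin n) (Fin m) ℝ)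
    (R : Matrix (Fin m) (Fin m) ℝ) (hRsymm : Rᵀ = R)
    (Rd : Matrix (Fin m) (Fin m) ℝ)
    (P : Matrix (Fin n) (Fin n) ℝ) (hPsymm : Pᵀ = P)
    (hRic : Aᵀ * P + P * A + Q - P * B * Rd * Bᵀ * P = 0)
    (hReg : Bᵀ * P = R * Rd * Bᵀ * P)
    (x : ℝ → Fin n → ℝ) (u : ℝ → Fin m → ℝ)
    (hx : ∀ t : ℝ, HasDerivAt x (A.mulVec (x t) + B.mulVec (u t)) t) :
    ∀ t : ℝ, HasDerivAt (fun t => x t ⬝ᵥ P.mulVec (x t))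
      (-(x t ⬝ᵥ Q.mulVec (x t)) - u t ⬝ᵥ R.mulVec (u t)
        + (u t + Rd.mulVec (Bᵀ.mulVec (P.mulVec (x t)))) ⬝ᵥ
          R.mulVec (u t + Rd.mulVec (Bᵀ.mulVec (P.mulVec (x t))))) t := by
  intro t
  simpa only [mulVec_add_dotProduct_mulVec_add_eq_of_riccati hRsymm hPsymm hRic hReg] using
    (hx t).dotProduct ((hx t).const_mulVec P)

/-- Derivative of the quadratic Lyapunov-like function `x(t)ᵀ P x(t)`
along trajectories of `x' = A x + B u`, under the regular algebraic Riccati equation. -/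
theorem stmt_2 {n m : ℕ}
    (A Q : Matrix (Fin n) (Fin n) ℝ) (B : Matrix (Fin n) (Fin m) ℝ)
    (R : Matrix (Fin m) (Fin m) ℝ) (hRsymm : Rᵀ = R)
    (Rd : Matrix (Fin m) (Fin m) ℝ)
    (hR1 : R * Rd * R = R) (hR2 : Rd * R * Rd = Rd)
    (hR3 : (R * Rd)ᵀ = R * Rd) (hR4 : (Rd * R)ᵀ = Rd * R)
    (P : Matrix (Fin n) (Fin n) ℝ) (hPsymm : Pᵀ = P)
    (hRic : Aᵀ * P + P * A + Q - P * B * Rd * Bᵀ * P = 0)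
    (hReg : Bᵀ * P = R * Rd * Bᵀ * P)
    (x : ℝ → Fin n → ℝ) (u : ℝ → Fin m → ℝ)
    (hx : ∀ t : ℝ, HasDerivAt x (A.mulVec (x t) + B.mulVec (u t)) t) :
    ∀ t : ℝ, HasDerivAt (fun t => x t ⬝ᵥ P.mulVec (x t))
      (-(x t ⬝ᵥ Q.mulVec (x t)) - u t ⬝ᵥ R.mulVec (u t)
        + (u t + Rd.mulVec (Bᵀ.mulVec (P.mulVec (x t)))) ⬝ᵥ
          R.mulVec (u t + Rd.mulVec (Bᵀ.mulVec (P.mulVec (x t))))) t :=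
  stmt_2_general A Q B R hRsymm Rd P hPsymm hRic hReg x u hx
end

section
/- Let R be a symmetric positive semidefinite real m×m matrix and let T be a real orthogonal m×m matrix such that Tᵀ R T is the block diagonal matrix diag(R₁, 0), where R₁ is an invertible symmetric m₁×m₁ matrix. Write B T = [B₁ B₂] in the corresponding block decomposition of an n×m matrix B, and let R⁺ = T · diag(R₁⁻¹, 0) · Tᵀ. Then R⁺ is a Moore–Penrose inverse of R, and a symmetric real n×n matrix P satisfies AᵀP + PA + Q − P B R⁺ Bᵀ P = 0 together with Bᵀ P = R R⁺ Bᵀ P if and only if it satisfies AᵀP + PA + Q − P B₁ R₁⁻¹ B₁ᵀ P = 0 together with B₂ᵀ P = 0. -/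
/-!
Conjugation by the orthogonal `T` reduces everything to block form. There `diag(R₁⁻¹, 0)` is a
Moore–Penrose inverse of `diag(R₁, 0)`, which conjugation preserves; `B R⁺ Bᵀ` becomes
`[B₁ B₂] diag(R₁⁻¹, 0) [B₁ B₂]ᵀ = B₁ R₁⁻¹ B₁ᵀ`; and `R R⁺ = T diag(1, 0) Tᵀ`, so after cancelling
`T` the condition `Bᵀ P = R R⁺ Bᵀ P` compares the rows `(B₁ᵀ P, B₂ᵀ P)` with `(B₁ᵀ P, 0)`.
-/

open Matrix

def IsMoorePenroseInverse {m n 𝕜 : Type*} [Fintype m] [Fintype n] [Semiring 𝕜]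
    (M : Matrix m n 𝕜) (N : Matrix n m 𝕜) : Prop :=
  M * N * M = M ∧ N * M * N = N ∧ (M * N)ᵀ = M * N ∧ (N * M)ᵀ = N * M

section Orthogonal

variable {ι α 𝕜 : Type*} [Fintype ι] [CommRing 𝕜] {T : Matrix ι ι 𝕜}

theorem conj_mul_mul [DecidableEq ι] (hT : Tᵀ * T = 1) (X : Matrix ι ι 𝕜) (Y : Matrix ι α 𝕜) :
    T * X * Tᵀ * (T * Y) = T * (X * Y) := by
  simp only [Matrix.mul_assoc]
  rw [← Matrix.mul_assoc Tᵀ, hT, Matrix.one_mul]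

theorem conj_mul_conj [DecidableEq ι] (hT : Tᵀ * T = 1) (X Y : Matrix ι ι 𝕜) :
    T * X * Tᵀ * (T * Y * Tᵀ) = T * (X * Y) * Tᵀ := by
  rw [Matrix.mul_assoc T Y, conj_mul_mul hT]
  simp only [Matrix.mul_assoc]

theorem mul_conj_mul_transpose [Fintype α] (B C : Matrix α ι 𝕜) (X : Matrix ι ι 𝕜) :
    B * (T * X * Tᵀ) * Cᵀ = B * T * X * (C * T)ᵀ := by
  simp only [transpose_mul, Matrix.mul_assoc]

theorem transpose_conj (X : Matrix ι ι 𝕜) : (T * X * Tᵀ)ᵀ = T * Xᵀ * Tᵀ := by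
  rw [transpose_mul, transpose_mul, transpose_transpose, Matrix.mul_assoc]

theorem eq_conj_of_transpose_conj_eq [DecidableEq ι] (hT : Tᵀ * T = 1) {R D : Matrix ι ι 𝕜}
    (h : Tᵀ * R * T = D) : R = T * D * Tᵀ := by
  have hTT : T * Tᵀ = 1 := mul_eq_one_comm.mp hT
  rw [← h, ← Matrix.mul_assoc, ← Matrix.mul_assoc, hTT, Matrix.one_mul, Matrix.mul_assoc, hTT,
    Matrix.mul_one]

theorem mul_right_inj_of_transpose_mul_eq_one [DecidableEq ι] (hT : Tᵀ * T = 1)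
    {X Y : Matrix ι α 𝕜} : T * X = T * Y ↔ X = Y := by
  refine ⟨fun h => ?_, congrArg (T * ·)⟩
  simpa [← Matrix.mul_assoc, hT] using congrArg (Tᵀ * ·) h

theorem IsMoorePenroseInverse.conj [DecidableEq ι] (hT : Tᵀ * T = 1) {M N : Matrix ι ι 𝕜}
    (h : IsMoorePenroseInverse M N) : IsMoorePenroseInverse (T * M * Tᵀ) (T * N * Tᵀ) := by
  obtain ⟨h₁, h₂, h₃, h₄⟩ := h
  refine ⟨?_, ?_, ?_, ?_⟩ <;> simp only [conj_mul_conj hT, transpose_conj, h₁, h₂, h₃, h₄]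

end Orthogonal

section Blocks

variable {l m₁ m₂ n₁ n₂ 𝕜 : Type*} [Fintype m₁] [Fintype m₂] [Fintype n₁] [Fintype n₂]
  [CommRing 𝕜]

theorem isMoorePenroseInverse_inv [DecidableEq n₁] {M : Matrix n₁ n₁ 𝕜} (h : IsUnit M.det) :
    IsMoorePenroseInverse M M⁻¹ := by
  refine ⟨?_, ?_, ?_, ?_⟩ <;> simp [mul_nonsing_inv _ h, nonsing_inv_mul _ h]

theorem IsMoorePenroseInverse.fromBlocks_zero {M : Matrix m₁ n₁ 𝕜} {N : Matrix n₁ m₁ 𝕜}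
    (h : IsMoorePenroseInverse M N) :
    IsMoorePenroseInverse (fromBlocks M 0 0 (0 : Matrix m₂ n₂ 𝕜)) (fromBlocks N 0 0 0) := by
  obtain ⟨h₁, h₂, h₃, h₄⟩ := h
  refine ⟨?_, ?_, ?_, ?_⟩ <;> simp [fromBlocks_multiply, fromBlocks_transpose, h₁, h₂, h₃, h₄]

theorem fromCols_mul_fromBlocks_zero_mul_transpose_fromCols (B₁ : Matrix l m₁ 𝕜)
    (B₂ : Matrix l m₂ 𝕜) (C₁ : Matrix l n₁ 𝕜) (C₂ : Matrix l n₂ 𝕜) (X : Matrix m₁ n₁ 𝕜) :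
    fromCols B₁ B₂ * fromBlocks X 0 0 (0 : Matrix m₂ n₂ 𝕜) * (fromCols C₁ C₂)ᵀ = B₁ * X * C₁ᵀ := by
  simp [transpose_fromCols, fromCols_mul_fromBlocks, fromCols_mul_fromRows]

theorem fromBlocks_one_zero_mul_fromRows [DecidableEq m₁] (Y₁ : Matrix m₁ l 𝕜)
    (Y₂ : Matrix m₂ l 𝕜) :
    fromBlocks (1 : Matrix m₁ m₁ 𝕜) 0 0 (0 : Matrix m₂ m₂ 𝕜) * fromRows Y₁ Y₂ =
      fromRows Y₁ 0 := by
  simp [fromBlocks_mul_fromRows]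

end Blocks

theorem stmt_7_general {n m₁ m₂ : ℕ}
    (A Q : Matrix (Fin n) (Fin n) ℝ)
    (R : Matrix (Fin m₁ ⊕ Fin m₂) (Fin m₁ ⊕ Fin m₂) ℝ)
    (T : Matrix (Fin m₁ ⊕ Fin m₂) (Fin m₁ ⊕ Fin m₂) ℝ) (hT : Tᵀ * T = 1)
    (R₁ : Matrix (Fin m₁) (Fin m₁) ℝ) (hR₁inv : IsUnit R₁.det)
    (hdiag : Tᵀ * R * T = Matrix.fromBlocks R₁ 0 0 0)
    (B : Matrix (Fin n) (Fin m₁ ⊕ Fin m₂) ℝ)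
    (B₁ : Matrix (Fin n) (Fin m₁) ℝ) (B₂ : Matrix (Fin n) (Fin m₂) ℝ)
    (hB : B * T = Matrix.fromCols B₁ B₂)
    (Rd : Matrix (Fin m₁ ⊕ Fin m₂) (Fin m₁ ⊕ Fin m₂) ℝ)
    (hRd : Rd = T * Matrix.fromBlocks R₁⁻¹ 0 0 0 * Tᵀ) :
    (R * Rd * R = R ∧ Rd * R * Rd = Rd ∧ (R * Rd)ᵀ = R * Rd ∧ (Rd * R)ᵀ = Rd * R) ∧
    (∀ P : Matrix (Fin n) (Fin n) ℝ, Pᵀ = P →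
      ((Aᵀ * P + P * A + Q - P * B * Rd * Bᵀ * P = 0 ∧ Bᵀ * P = R * Rd * Bᵀ * P) ↔
       (Aᵀ * P + P * A + Q - P * B₁ * R₁⁻¹ * B₁ᵀ * P = 0 ∧ B₂ᵀ * P = 0))) := by
  have hR : R = T * fromBlocks R₁ 0 0 0 * Tᵀ := eq_conj_of_transpose_conj_eq hT hdiag
  have hBT : B = fromCols B₁ B₂ * Tᵀ := by
    rw [← hB, Matrix.mul_assoc, mul_eq_one_comm.mp hT, Matrix.mul_one]
  refine ⟨hR ▸ hRd ▸ ((isMoorePenroseInverse_inv hR₁inv).fromBlocks_zero.conj hT), fun P _ => ?_⟩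
  have hquadratic : B * Rd * Bᵀ = B₁ * R₁⁻¹ * B₁ᵀ := by
    rw [hRd, mul_conj_mul_transpose, hB, fromCols_mul_fromBlocks_zero_mul_transpose_fromCols]
  have hproj : R * Rd = T * fromBlocks 1 0 0 0 * Tᵀ := by
    rw [hR, hRd, conj_mul_conj hT, fromBlocks_multiply]
    simp [mul_nonsing_inv _ hR₁inv]
  have hBtP : Bᵀ * P = T * fromRows (B₁ᵀ * P) (B₂ᵀ * P) := by
    rw [hBT, transpose_mul, transpose_transpose, transpose_fromCols, Matrix.mul_assoc, fromRows_mul]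
  have hrange : Bᵀ * P = R * Rd * Bᵀ * P ↔ B₂ᵀ * P = 0 := by
    rw [Matrix.mul_assoc, hproj, hBtP, conj_mul_mul hT, mul_right_inj_of_transpose_mul_eq_one hT,
      fromBlocks_one_zero_mul_fromRows, fromRows_ext_iff]
    exact and_iff_right rfl
  rw [show P * B * Rd * Bᵀ * P = P * (B * Rd * Bᵀ) * P by simp only [Matrix.mul_assoc], hquadratic,
    hrange]
  simp only [Matrix.mul_assoc]

/-- After an orthogonal transformation diagonalizing `R` as
`diag(R₁, 0)` with `R₁` invertible, `R⁺ = T diag(R₁⁻¹, 0) Tᵀ` is a Moore–Penrose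
inverse of `R`, and the regular Riccati equation is equivalent to the standard
Riccati equation in `B₁, R₁` together with `B₂ᵀ P = 0`. -/
theorem stmt_7 {n m₁ m₂ : ℕ}
    (A Q : Matrix (Fin n) (Fin n) ℝ)
    (R : Matrix (Fin m₁ ⊕ Fin m₂) (Fin m₁ ⊕ Fin m₂) ℝ) (hR : R.PosSemidef)
    (T : Matrix (Fin m₁ ⊕ Fin m₂) (Fin m₁ ⊕ Fin m₂) ℝ) (hT : Tᵀ * T = 1)
    (R₁ : Matrix (Fin m₁) (Fin m₁) ℝ) (hR₁symm : R₁ᵀ = R₁) (hR₁inv : IsUnit R₁.det)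
    (hdiag : Tᵀ * R * T = Matrix.fromBlocks R₁ 0 0 0)
    (B : Matrix (Fin n) (Fin m₁ ⊕ Fin m₂) ℝ)
    (B₁ : Matrix (Fin n) (Fin m₁) ℝ) (B₂ : Matrix (Fin n) (Fin m₂) ℝ)
    (hB : B * T = Matrix.fromCols B₁ B₂)
    (Rd : Matrix (Fin m₁ ⊕ Fin m₂) (Fin m₁ ⊕ Fin m₂) ℝ)
    (hRd : Rd = T * Matrix.fromBlocks R₁⁻¹ 0 0 0 * Tᵀ) :
    (R * Rd * R = R ∧ Rd * R * Rd = Rd ∧ (R * Rd)ᵀ = R * Rd ∧ (Rd * R)ᵀ = Rd * R) ∧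
    (∀ P : Matrix (Fin n) (Fin n) ℝ, Pᵀ = P →
      ((Aᵀ * P + P * A + Q - P * B * Rd * Bᵀ * P = 0 ∧ Bᵀ * P = R * Rd * Bᵀ * P) ↔
       (Aᵀ * P + P * A + Q - P * B₁ * R₁⁻¹ * B₁ᵀ * P = 0 ∧ B₂ᵀ * P = 0))) :=
  stmt_7_general A Q R T hT R₁ hR₁inv hdiag B B₁ B₂ hB Rd hRd
end

section
/- Let A be a real n×n matrix, B a real n×m matrix, and let P be a symmetric positive definite real n×n matrix satisfying Aᵀ P + P A − P B Bᵀ P + I = 0. Then for every real number μ ≥ 1, every eigenvalue of the matrix A − μ B Bᵀ P (regarded as a complex matrix) has negative real part. -/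
/-!
With `M = A - μ B Bᵀ P`, the Riccati equation turns into the Lyapunov identity
`Mᵀ P + P M = -(I + (2μ - 1) (P B)(P B)ᵀ)`, whose right-hand side is negative definite once
`μ ≥ 1/2`. For an eigenvector `M v = λ v` this gives `2 Re λ · v* P v = v* (Mᵀ P + P M) v < 0`,
and `v* P v > 0`, so `Re λ < 0`.
-/

open Matrix

open scoped ComplexOrder

namespace Matrix

variable {ι 𝕜 : Type*} [Fintype ι] [RCLike 𝕜]

theorem re_star_dotProduct_mulVec_map_ofReal (P : Matrix ι ι ℝ) (v : ι → 𝕜) :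
    RCLike.re (star v ⬝ᵥ (P.map ((↑) : ℝ → 𝕜) *ᵥ v)) =
      (fun i ↦ RCLike.re (v i)) ⬝ᵥ (P *ᵥ fun i ↦ RCLike.re (v i)) +
        (fun i ↦ RCLike.im (v i)) ⬝ᵥ (P *ᵥ fun i ↦ RCLike.im (v i)) := by
  simp only [dotProduct, mulVec, map_sum, ← Finset.sum_add_distrib, Finset.mul_sum]
  refine Finset.sum_congr rfl fun i _ ↦ Finset.sum_congr rfl fun j _ ↦ ?_
  simp [RCLike.mul_re, RCLike.mul_im]

theorem PosDef.map_ofReal {P : Matrix ι ι ℝ} (hP : P.PosDef) :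
    (P.map ((↑) : ℝ → 𝕜)).PosDef := by
  have hH : (P.map ((↑) : ℝ → 𝕜)).IsHermitian :=
    hP.isHermitian.map _ fun x ↦ by simp
  refine PosDef.of_dotProduct_mulVec_pos hH fun v hv ↦
    RCLike.pos_iff.2 ⟨?_, hH.im_star_dotProduct_mulVec_self v⟩
  have hpos (w : ι → ℝ) (hw : w ≠ 0) : 0 < w ⬝ᵥ (P *ᵥ w) := by
    simpa only [star_trivial] using hP.dotProduct_mulVec_pos hw
  have hnonneg (w : ι → ℝ) : 0 ≤ w ⬝ᵥ (P *ᵥ w) := by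
    simpa only [star_trivial] using hP.posSemidef.dotProduct_mulVec_nonneg w
  have hre_or_him : (fun i ↦ RCLike.re (v i)) ≠ 0 ∨ (fun i ↦ RCLike.im (v i)) ≠ 0 := by
    by_contra! h
    exact hv <| funext fun i ↦
      RCLike.ext (by simpa using congrFun h.1 i) (by simpa using congrFun h.2 i)
  rw [re_star_dotProduct_mulVec_map_ofReal]
  rcases hre_or_him with hre | him
  · linarith [hpos _ hre, hnonneg fun i ↦ RCLike.im (v i)]
  · linarith [hpos _ him, hnonneg fun i ↦ RCLike.re (v i)]

theorem re_lt_zero_of_mem_spectrum_of_lyapunov [DecidableEq ι] {M P : Matrix ι ι 𝕜}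
    (hP : P.PosDef) (hL : (-(Mᴴ * P + P * M)).PosDef) {lam : 𝕜} (hlam : lam ∈ spectrum 𝕜 M) :
    RCLike.re lam < 0 := by
  rw [← spectrum_toLin', ← Module.End.hasEigenvalue_iff_mem_spectrum] at hlam
  obtain ⟨v, hv⟩ := hlam.exists_hasEigenvector
  have hMv : M *ᵥ v = lam • v := hv.apply_eq_smul
  have hquad : star v ⬝ᵥ ((Mᴴ * P + P * M) *ᵥ v) = (lam + star lam) * (star v ⬝ᵥ (P *ᵥ v)) := by
    rw [add_mulVec, ← mulVec_mulVec, ← mulVec_mulVec, dotProduct_add, dotProduct_mulVec,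
      ← star_mulVec, hMv, star_smul, smul_dotProduct, mulVec_smul, dotProduct_smul,
      smul_eq_mul, smul_eq_mul]
    ring
  have hc := RCLike.pos_iff.1 (hP.dotProduct_mulVec_pos hv.2)
  have hneg := RCLike.pos_iff.1 (hL.dotProduct_mulVec_pos hv.2)
  rw [neg_mulVec, dotProduct_neg, hquad, RCLike.star_def, RCLike.add_conj, ← RCLike.ofReal_ofNat,
    ← RCLike.ofReal_mul, ← neg_mul, ← RCLike.ofReal_neg, RCLike.re_ofReal_mul] at hneg
  nlinarith [hneg.1, hc.1]

theorem re_lt_zero_of_mem_spectrum_map_ofReal_of_lyapunov [DecidableEq ι] {M P : Matrix ι ι ℝ}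
    (hP : P.PosDef) (hL : (-(Mᵀ * P + P * M)).PosDef) {lam : 𝕜}
    (hlam : lam ∈ spectrum 𝕜 (M.map ((↑) : ℝ → 𝕜))) :
    RCLike.re lam < 0 := by
  refine re_lt_zero_of_mem_spectrum_of_lyapunov hP.map_ofReal ?_ hlam
  have hmap : -((M.map ((↑) : ℝ → 𝕜))ᴴ * P.map (↑) + P.map (↑) * M.map (↑)) =
      (-(Mᵀ * P + P * M)).map (↑) := by
    rw [← conjTranspose_map _ fun x ↦ (RCLike.conj_ofReal x).symm,
      conjTranspose_eq_transpose_of_trivial, ← RCLike.algebraMap_eq_ofReal, ← Matrix.map_mul,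
      ← Matrix.map_mul, ← Matrix.map_add _ (map_add _), ← Matrix.map_neg _ (map_neg _)]
  exact hmap ▸ hL.map_ofReal

theorem closed_loop_lyapunov_of_riccati {R n m : Type*} [CommRing R] [Fintype n] [Fintype m]
    [DecidableEq n] {A P : Matrix n n R} {B : Matrix n m R} (hPT : Pᵀ = P)
    (hRic : Aᵀ * P + P * A - P * B * Bᵀ * P + 1 = 0) (μ : R) :
    (A - μ • (B * Bᵀ * P))ᵀ * P + P * (A - μ • (B * Bᵀ * P)) =
      -(1 + (2 * μ - 1) • (P * B * (P * B)ᵀ)) := by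
  rw [← sub_eq_zero, ← hRic]
  simp only [transpose_sub, transpose_smul, transpose_mul, transpose_transpose, hPT, sub_mul,
    mul_sub, Matrix.smul_mul, Matrix.mul_smul, Matrix.mul_assoc]
  module

end Matrix

/-- If `P > 0` solves `Aᵀ P + P A − P B Bᵀ P + I = 0`, then for any
`μ ≥ 1` the matrix `A − μ B Bᵀ P` is Hurwitz. -/
theorem stmt_9 {n m : ℕ}
    (A : Matrix (Fin n) (Fin n) ℝ) (B : Matrix (Fin n) (Fin m) ℝ)
    (P : Matrix (Fin n) (Fin n) ℝ) (hP : P.PosDef)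
    (hRic : Aᵀ * P + P * A - P * B * Bᵀ * P + 1 = 0) :
    ∀ μ : ℝ, 1 ≤ μ →
      ∀ lam ∈ spectrum ℂ ((A - μ • (B * Bᵀ * P)).map (fun a => (a : ℂ))),
        lam.re < 0 := by
  intro μ hμ lam hlam
  refine re_lt_zero_of_mem_spectrum_map_ofReal_of_lyapunov hP ?_ hlam
  have hPT : Pᵀ = P := hP.isHermitian
  rw [closed_loop_lyapunov_of_riccati hPT hRic, neg_neg, ← conjTranspose_eq_transpose_of_trivial]
  exact PosDef.one.add_posSemidef ((posSemidef_self_mul_conjTranspose _).smul (by linarith))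
end
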